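/- arXiv:2207.03403 — 2 statements merged into one kernel-verified Lean document; each statement's English description precedes it below -/
import Mathlib

section
/- Fix p ∈ [0,1), m* ∈ ℕ, and a decision function d for the elementary link MDP; write α(m) := d(m)(0), ᾱ(m) := 1 − α(m). Define N_d := 1 − p(1 − ∏_{m′=0}^{m*} α(m′)) + p·ᾱ(−1)·(1 + ∑_{m=1}^{m*} ∏_{m′=0}^{m−1} α(m′)) (which is strictly positive since p < 1), and the vector s_d with s_d(−1) := (1 − p(1 − ∏_{m′=0}^{m*} α(m′)))/N_d, s_d(0) := p·ᾱ(−1)/N_d, and s_d(m) := p·ᾱ(−1)·(∏_{m′=0}^{m−1} α(m′))/N_d for 1 ≤ m ≤ m*. Then s_d is a probability vector (entrywise nonnegative and summing to 1), and it is a stationary vector of the induced Markov chain: ∑_{s ∈ S} P^d(s′; s)·s_d(s) = s_d(s′) for all s′ ∈ S. -/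
open BigOperators Filter

noncomputable section

/-- Transition matrix `T⁰` of the "wait" action on the state set `{-1, 0, …, m*}`:
it fixes `-1`, sends `m` to `m+1` for `0 ≤ m ≤ m*-1`, and sends `m*` to `-1`. -/
def T0 (mstar : ℕ) : ℤ → ℤ → ℝ := fun s' s =>
  if s = -1 then (if s' = -1 then 1 else 0)
  else if s = (mstar : ℤ) then (if s' = -1 then 1 else 0)
  else if s' = s + 1 then 1 else 0

/-- Transition matrix `T¹` of the "request" action: every state goes to `-1` with
probability `1-p` and to `0` with probability `p`. -/
def T1 (p : ℝ) : ℤ → ℤ → ℝ := fun s' _ =>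
  if s' = -1 then 1 - p else if s' = 0 then p else 0

/-- The transition matrix `P^d` induced by the decision function with wait-probability
`α s = d(s)(0)` and request-probability `1 - α s = d(s)(1)`. -/
def Pd (mstar : ℕ) (p : ℝ) (α : ℤ → ℝ) : ℤ → ℤ → ℝ := fun s' s =>
  T0 mstar s' s * α s + T1 p s' s * (1 - α s)

/-- The distribution of the Markov chain `(M(t))` under the stationary policy `(d, d, …)`;
time `0` carries the initial distribution `μ0` of `M(1)`. -/
def chainDist (mstar : ℕ) (p : ℝ) (α : ℤ → ℝ) (μ0 : ℤ → ℝ) : ℕ → ℤ → ℝ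
  | 0 => μ0
  | (t + 1) => fun s' =>
      ∑ s ∈ Finset.Icc (-1 : ℤ) (mstar : ℤ), Pd mstar p α s' s * chainDist mstar p α μ0 t s

/-- The expected link value `F̃^{(d,d,…)}(t) = ∑_{m=0}^{m*} f(m) Pr[M(t) = m]`. -/
def Ftil (mstar : ℕ) (p : ℝ) (α : ℤ → ℝ) (μ0 : ℤ → ℝ) (f : ℤ → ℝ) (t : ℕ) : ℝ :=
  ∑ m ∈ Finset.Icc (0 : ℤ) (mstar : ℤ), f m * chainDist mstar p α μ0 t m

/-- `α` is a valid decision function: each `α s` is a probability. -/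
def ValidDecision (mstar : ℕ) (α : ℤ → ℝ) : Prop :=
  ∀ s ∈ Finset.Icc (-1 : ℤ) (mstar : ℤ), 0 ≤ α s ∧ α s ≤ 1

/-- `μ0` is a valid initial distribution on the state set. -/
def ValidInit (mstar : ℕ) (μ0 : ℤ → ℝ) : Prop :=
  (∀ s ∈ Finset.Icc (-1 : ℤ) (mstar : ℤ), 0 ≤ μ0 s) ∧
    ∑ s ∈ Finset.Icc (-1 : ℤ) (mstar : ℤ), μ0 s = 1

/-- The normalization constant `N_d`. -/
def Nd (mstar : ℕ) (p : ℝ) (α : ℤ → ℝ) : ℝ :=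
  1 - p * (1 - ∏ m' ∈ Finset.Icc (0 : ℤ) (mstar : ℤ), α m')
    + p * (1 - α (-1)) *
        (1 + ∑ m ∈ Finset.Icc (1 : ℤ) (mstar : ℤ), ∏ m' ∈ Finset.Icc (0 : ℤ) (m - 1), α m')

/-- The steady-state distribution `s_d`. -/
def sd (mstar : ℕ) (p : ℝ) (α : ℤ → ℝ) : ℤ → ℝ := fun m =>
  if m = -1 then
    (1 - p * (1 - ∏ m' ∈ Finset.Icc (0 : ℤ) (mstar : ℤ), α m')) / Nd mstar p α
  else if m = 0 then p * (1 - α (-1)) / Nd mstar p α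
  else p * (1 - α (-1)) * (∏ m' ∈ Finset.Icc (0 : ℤ) (m - 1), α m') / Nd mstar p α

open Finset

/-! With `W m := ∏_{m' < m} α m'`, the probability that a fresh link is kept (not re-requested)
through the ages `0, …, m - 1`, the candidate is `s_d(m) ∝ p (1 - α(-1)) W m` for `m ≥ 0`.
Since `T¹` does not depend on the current state, the inflow into `-1` and `0` through requests is
governed by the total request mass `∑ₛ (1 - α s) s_d(s)`, which the telescoping identity
`∑_{m ≤ m*} (1 - α m) W m = 1 - W (m* + 1)` reduces to `(1 - α(-1)) / N_d`. Balance at age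
`m ≥ 1` is then `s_d(m) = α(m - 1) s_d(m - 1)`, balance at `0` is pure inflow from requests,
and balance at `-1` is a direct computation. -/

def waitProb (α : ℤ → ℝ) (m : ℤ) : ℝ := ∏ m' ∈ Icc 0 (m - 1), α m'

section waitProb

variable (α : ℤ → ℝ)

lemma waitProb_zero : waitProb α 0 = 1 := by
  simp [waitProb]

lemma waitProb_add_one {m : ℤ} (hm : 0 ≤ m) : waitProb α (m + 1) = α m * waitProb α m := by
  rw [waitProb, add_sub_cancel_right, ← insert_Icc_sub_one_right_eq_Icc hm,
    prod_insert (by simp), waitProb]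

lemma prod_Icc_zero_eq_waitProb (n : ℤ) : ∏ m' ∈ Icc 0 n, α m' = waitProb α (n + 1) := by
  rw [waitProb, add_sub_cancel_right]

lemma sum_one_sub_mul_waitProb {n : ℤ} (hn : -1 ≤ n) :
    ∑ m ∈ Icc 0 n, (1 - α m) * waitProb α m = 1 - waitProb α (n + 1) := by
  induction n, hn using Int.leInduction with
  | base => simp [waitProb_zero]
  | succ n hn ih =>
    rw [← insert_Icc_right_eq_Icc_add_one (by omega), sum_insert (by simp), ih,
      waitProb_add_one α (by omega : 0 ≤ n + 1)]
    ring

end waitProb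

lemma Icc_neg_one_eq_insert {n : ℤ} (hn : -1 ≤ n) : Icc (-1) n = insert (-1) (Icc 0 n) := by
  simpa using (insert_Icc_add_one_left_eq_Icc hn).symm

section Pd

variable (mstar : ℕ) (p : ℝ) (α : ℤ → ℝ)

lemma sum_Pd_mul (S : Finset ℤ) (v : ℤ → ℝ) (s' : ℤ) :
    ∑ s ∈ S, Pd mstar p α s' s * v s
      = ∑ s ∈ S, T0 mstar s' s * (α s * v s) + T1 p s' 0 * ∑ s ∈ S, (1 - α s) * v s := by
  rw [mul_sum, ← sum_add_distrib]
  exact sum_congr rfl fun s _ => by simp only [Pd, T1]; ring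

lemma sum_T0_mul (v : ℤ → ℝ) {s' : ℤ} (hs' : s' ∈ Icc (-1 : ℤ) mstar) :
    ∑ s ∈ Icc (-1 : ℤ) mstar, T0 mstar s' s * v s
      = if s' = -1 then v (-1) + v mstar else if s' = 0 then 0 else v (s' - 1) := by
  rw [mem_Icc] at hs'
  split_ifs with h₁ h₂
  · have hT : ∀ s ∈ Icc (-1 : ℤ) mstar, T0 mstar s' s * v s
        = (if s = -1 then v s else 0) + (if s = mstar then v s else 0) := by
      intro s hs
      rw [mem_Icc] at hs
      unfold T0
      split_ifs <;> first | omega | ring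
    rw [sum_congr rfl hT, sum_add_distrib, sum_ite_eq', sum_ite_eq', if_pos (by simp),
      if_pos (by simp)]
  · refine sum_eq_zero fun s hs => ?_
    rw [mem_Icc] at hs
    unfold T0
    split_ifs <;> first | omega | ring
  · have hT : ∀ s ∈ Icc (-1 : ℤ) mstar,
        T0 mstar s' s * v s = if s = s' - 1 then v s else 0 := by
      intro s hs
      rw [mem_Icc] at hs
      unfold T0
      split_ifs <;> first | omega | ring
    rw [sum_congr rfl hT, sum_ite_eq', if_pos (by rw [mem_Icc]; omega)]

end Pd

section sd

variable (mstar : ℕ) (p : ℝ) (α : ℤ → ℝ)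

lemma Nd_eq_sum_waitProb :
    Nd mstar p α = 1 - p * (1 - waitProb α (mstar + 1))
      + p * (1 - α (-1)) * ∑ m ∈ Icc 0 (mstar : ℤ), waitProb α m := by
  rw [Nd, prod_Icc_zero_eq_waitProb,
    ← insert_Icc_add_one_left_eq_Icc (by positivity : (0 : ℤ) ≤ mstar), sum_insert (by simp),
    waitProb_zero]
  rfl

lemma sd_neg_one :
    sd mstar p α (-1) = (1 - p * (1 - waitProb α (mstar + 1))) / Nd mstar p α := by
  simp [sd, prod_Icc_zero_eq_waitProb]

lemma sd_of_nonneg {m : ℤ} (hm : 0 ≤ m) :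
    sd mstar p α m = p * (1 - α (-1)) * waitProb α m / Nd mstar p α := by
  obtain rfl | hm := hm.eq_or_lt
  · simp [sd, waitProb_zero]
  · rw [sd, if_neg (by omega), if_neg hm.ne', waitProb]

lemma sum_sd (hN : Nd mstar p α ≠ 0) : ∑ s ∈ Icc (-1 : ℤ) mstar, sd mstar p α s = 1 := by
  rw [Icc_neg_one_eq_insert (by omega), sum_insert (by simp), sd_neg_one,
    sum_congr rfl fun m hm => sd_of_nonneg mstar p α (mem_Icc.mp hm).1, ← sum_div, ← mul_sum,
    ← add_div, ← Nd_eq_sum_waitProb, div_self hN]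

lemma sum_one_sub_mul_sd : ∑ s ∈ Icc (-1 : ℤ) mstar, (1 - α s) * sd mstar p α s
    = (1 - α (-1)) / Nd mstar p α := by
  have hsum : ∑ m ∈ Icc 0 (mstar : ℤ), (1 - α m) * sd mstar p α m
      = p * (1 - α (-1)) * (1 - waitProb α (mstar + 1)) / Nd mstar p α := by
    rw [← sum_one_sub_mul_waitProb α (by omega), mul_sum, sum_div]
    exact sum_congr rfl fun m hm => by rw [sd_of_nonneg mstar p α (mem_Icc.mp hm).1]; ring
  rw [Icc_neg_one_eq_insert (by omega), sum_insert (by simp), hsum, sd_neg_one]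
  ring

lemma sum_Pd_mul_sd {s' : ℤ} (hs' : s' ∈ Icc (-1 : ℤ) mstar) :
    ∑ s ∈ Icc (-1 : ℤ) mstar, Pd mstar p α s' s * sd mstar p α s = sd mstar p α s' := by
  rw [sum_Pd_mul, sum_T0_mul mstar _ hs', sum_one_sub_mul_sd]
  rw [mem_Icc] at hs'
  split_ifs with h₁ h₂
  · subst h₁
    rw [sd_neg_one, sd_of_nonneg mstar p α (by positivity), waitProb_add_one α (by positivity)]
    simp only [T1, if_true]
    ring
  · subst h₂
    rw [sd_of_nonneg mstar p α le_rfl, waitProb_zero, T1, if_neg h₁, if_pos rfl]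
    ring
  · have hprev : 0 ≤ s' - 1 := by omega
    have hstep := waitProb_add_one α hprev
    rw [sub_add_cancel] at hstep
    rw [sd_of_nonneg mstar p α hprev, sd_of_nonneg mstar p α (by omega), hstep, T1, if_neg h₁,
      if_neg h₂]
    ring

end sd

section nonneg

variable {mstar : ℕ} {p : ℝ} {α : ℤ → ℝ}

lemma waitProb_nonneg_of_validDecision (hα : ValidDecision mstar α) {m : ℤ}
    (hm : m ≤ mstar + 1) : 0 ≤ waitProb α m :=
  prod_nonneg fun m' hm' => (hα m' (by rw [mem_Icc] at hm' ⊢; omega)).1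

lemma Nd_pos (hp0 : 0 ≤ p) (hp1 : p < 1) (hα : ValidDecision mstar α) : 0 < Nd mstar p α := by
  have hW := waitProb_nonneg_of_validDecision hα le_rfl
  have hsum : 0 ≤ ∑ m ∈ Icc 0 (mstar : ℤ), waitProb α m :=
    sum_nonneg fun m hm => waitProb_nonneg_of_validDecision hα (by rw [mem_Icc] at hm; omega)
  have hreq : 0 ≤ p * (1 - α (-1)) := mul_nonneg hp0 (sub_nonneg.2 (hα (-1) (by simp)).2)
  rw [Nd_eq_sum_waitProb]
  nlinarith [mul_nonneg hreq hsum]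

lemma sd_nonneg (hp0 : 0 ≤ p) (hp1 : p < 1) (hα : ValidDecision mstar α) {s : ℤ}
    (hs : s ∈ Icc (-1 : ℤ) mstar) : 0 ≤ sd mstar p α s := by
  have hN := Nd_pos hp0 hp1 hα
  rw [mem_Icc] at hs
  obtain rfl | hs0 := hs.1.eq_or_lt
  · have hW := waitProb_nonneg_of_validDecision hα le_rfl
    rw [sd_neg_one]
    exact div_nonneg (by nlinarith) hN.le
  · have hreq : 0 ≤ p * (1 - α (-1)) := mul_nonneg hp0 (sub_nonneg.2 (hα (-1) (by simp)).2)
    rw [sd_of_nonneg mstar p α (by omega)]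
    exact div_nonneg (mul_nonneg hreq (waitProb_nonneg_of_validDecision hα (by omega))) hN.le

end nonneg

/-- **`s_d` is a stationary probability vector of the induced chain** for `p ∈ [0,1)`:
`N_d > 0`, `s_d` is entrywise nonnegative and sums to one, and
`∑_s P^d(s'; s) s_d(s) = s_d(s')` for all states `s'`. -/
theorem sd_stationary (mstar : ℕ) (p : ℝ) (hp0 : 0 ≤ p) (hp1 : p < 1)
    (α : ℤ → ℝ) (hα : ValidDecision mstar α) :
    0 < Nd mstar p α ∧
    (∀ s ∈ Finset.Icc (-1 : ℤ) (mstar : ℤ), 0 ≤ sd mstar p α s) ∧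
    (∑ s ∈ Finset.Icc (-1 : ℤ) (mstar : ℤ), sd mstar p α s) = 1 ∧
    (∀ s' ∈ Finset.Icc (-1 : ℤ) (mstar : ℤ),
      ∑ s ∈ Finset.Icc (-1 : ℤ) (mstar : ℤ), Pd mstar p α s' s * sd mstar p α s
        = sd mstar p α s') := by
  have hN := Nd_pos hp0 hp1 hα
  exact ⟨hN, fun s hs => sd_nonneg hp0 hp1 hα hs, sum_sd mstar p α hN.ne',
    fun s' hs' => sum_Pd_mul_sd mstar p α hs'⟩
end
end

section
/- Linear program for the optimal steady-state value of an elementary link: let p ∈ (0,1), m* ∈ ℕ, and f : {−1,0,…,m*} → [0,1] with f(−1) = 0, and set |f⟩ := ∑_{m=−1}^{m*} f(m)|m⟩ and |γ⟩ := ∑_{m=−1}^{m*} |m⟩. Then sup over all decision functions d of lim_{t→∞} F̃^{(d,d,…)}(t) equals the optimal value of the linear program: maximize ⟨f|v⟩ over (m*+2)-dimensional real vectors v, w₀, w₁ subject to the componentwise constraints 0 ≤ w_a ≤ v ≤ 1 for a ∈ {0,1}, ⟨γ|v⟩ = 1, and w₀ + w₁ = v = T⁰w₀ + T¹w₁. Moreover,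 every feasible point (v, w₀, w₁) yields a decision function via d(m)(a) = ⟨m|w_a⟩/⟨m|v⟩ whenever ⟨m|v⟩ > 0 (arbitrary d(m) when ⟨m|v⟩ = 0). -/
open BigOperators Filter

noncomputable section

/-- Feasibility of a point `(v, w₀, w₁)` for the elementary-link linear program:
`0 ≤ w_a ≤ v ≤ 1` componentwise, `⟨γ|v⟩ = 1`, and `w₀ + w₁ = v = T⁰w₀ + T¹w₁`. -/
def LPFeasible (mstar : ℕ) (p : ℝ) (v w0 w1 : ℤ → ℝ) : Prop :=
  (∀ s ∈ Finset.Icc (-1 : ℤ) (mstar : ℤ),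
      0 ≤ w0 s ∧ w0 s ≤ v s ∧ 0 ≤ w1 s ∧ w1 s ≤ v s ∧ v s ≤ 1) ∧
  (∑ s ∈ Finset.Icc (-1 : ℤ) (mstar : ℤ), v s) = 1 ∧
  (∀ s ∈ Finset.Icc (-1 : ℤ) (mstar : ℤ), w0 s + w1 s = v s) ∧
  (∀ s' ∈ Finset.Icc (-1 : ℤ) (mstar : ℤ),
      v s' = ∑ s ∈ Finset.Icc (-1 : ℤ) (mstar : ℤ), (T0 mstar s' s * w0 s + T1 p s' s * w1 s))

/-!
For a fixed decision function the chain satisfies Doeblin's condition: from every state it either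
waits and moves towards `m*`, or requests and falls to `-1` with probability `1 - p`, and from `m*`
and `-1` it goes to `-1` with probability at least `1 - p`. Hence after `m* + 1` steps a fraction
`(1 - p)^(m* + 1)` of any distribution sits at `-1`, so the `(m* + 1)`-step operator contracts
mass-zero vectors in `ℓ¹`. Consequently the chain converges, from every initial distribution, to
the unique stationary distribution `v` of the decision. Writing `w₀ = α v`, `w₁ = (1 - α) v`
turns stationarity of `v` into the constraints of the linear program, and conversely a feasible
point gives the decision `α = w₀ / v` with stationary distribution `v`. So the two sets whose
suprema are compared are equal.
-/

section TransitionOp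

variable {ι : Type*} (S : Finset ι) (P : ι → ι → ℝ)

def transitionOp : Module.End ℝ (ι → ℝ) where
  toFun μ s' := ∑ s ∈ S, P s' s * μ s
  map_add' μ ν := by funext s'; simp [mul_add, Finset.sum_add_distrib]
  map_smul' c μ := by funext s'; simp [Finset.mul_sum, mul_left_comm]

structure IsColumnStochasticOn : Prop where
  nonneg : ∀ s' ∈ S, ∀ s ∈ S, 0 ≤ P s' s
  sum_eq_one : ∀ s ∈ S, ∑ s' ∈ S, P s' s = 1

def DoeblinCondition (N : ℕ) (s₀ : ι) (δ : ℝ) : Prop :=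
  ∀ μ : ι → ℝ, (∀ s ∈ S, 0 ≤ μ s) → δ * ∑ s ∈ S, μ s ≤ (transitionOp S P ^ N) μ s₀

def IsStationaryOn (v : ι → ℝ) : Prop :=
  ∀ s ∈ S, transitionOp S P v s = v s

variable {S P}

theorem transitionOp_apply (μ : ι → ℝ) (s' : ι) :
    transitionOp S P μ s' = ∑ s ∈ S, P s' s * μ s := rfl

theorem transitionOp_pow_succ_apply (n : ℕ) (μ : ι → ℝ) (s' : ι) :
    (transitionOp S P ^ (n + 1)) μ s' = ∑ s ∈ S, P s' s * (transitionOp S P ^ n) μ s := by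
  rw [pow_succ', Module.End.mul_apply, transitionOp_apply]

theorem transitionOp_pow_nonneg (hP : ∀ s' ∈ S, ∀ s ∈ S, 0 ≤ P s' s) (n : ℕ) {μ : ι → ℝ}
    (hμ : ∀ s ∈ S, 0 ≤ μ s) : ∀ s ∈ S, 0 ≤ (transitionOp S P ^ n) μ s := by
  induction n with
  | zero => exact hμ
  | succ n ih =>
    intro s' hs'
    rw [transitionOp_pow_succ_apply]
    exact Finset.sum_nonneg fun s hs => mul_nonneg (hP s' hs' s hs) (ih s hs)

theorem sum_transitionOp_pow (hP : ∀ s ∈ S, ∑ s' ∈ S, P s' s = 1) (n : ℕ) (μ : ι → ℝ) :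
    ∑ s ∈ S, (transitionOp S P ^ n) μ s = ∑ s ∈ S, μ s := by
  induction n with
  | zero => rfl
  | succ n ih =>
    simp_rw [transitionOp_pow_succ_apply]
    rw [Finset.sum_comm, ← ih]
    refine Finset.sum_congr rfl fun s hs => ?_
    rw [← Finset.sum_mul, hP s hs, one_mul]

theorem IsStationaryOn.transitionOp_pow_apply {v : ι → ℝ} (hv : IsStationaryOn S P v) (n : ℕ) :
    ∀ s ∈ S, (transitionOp S P ^ n) v s = v s := by
  induction n with
  | zero => exact fun _ _ => rfl
  | succ n ih =>
    intro s' hs'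
    rw [transitionOp_pow_succ_apply, ← hv s' hs', transitionOp_apply]
    exact Finset.sum_congr rfl fun s hs => by rw [ih s hs]

theorem sum_abs_apply_le_of_pos {A : Module.End ℝ (ι → ℝ)} {c : ℝ}
    (hpos : ∀ μ : ι → ℝ, (∀ s ∈ S, 0 ≤ μ s) → ∀ s ∈ S, 0 ≤ A μ s)
    (hmass : ∀ μ : ι → ℝ, ∑ s ∈ S, A μ s = c * ∑ s ∈ S, μ s) (μ : ι → ℝ) :
    ∑ s ∈ S, |A μ s| ≤ c * ∑ s ∈ S, |μ s| := by
  have hsplit : A μ = A μ⁺ - A μ⁻ := by rw [← map_sub, posPart_sub_negPart]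
  have hpos' := hpos μ⁺ fun s _ => posPart_nonneg (μ s)
  have hneg' := hpos μ⁻ fun s _ => negPart_nonneg (μ s)
  calc ∑ s ∈ S, |A μ s| ≤ ∑ s ∈ S, (A μ⁺ s + A μ⁻ s) := by
        refine Finset.sum_le_sum fun s hs => ?_
        rw [hsplit, Pi.sub_apply]
        exact abs_sub_le_iff.2 ⟨by linarith [hneg' s hs], by linarith [hpos' s hs]⟩
    _ = c * ∑ s ∈ S, |μ s| := by
        simp only [Finset.sum_add_distrib, hmass, ← mul_add, ← posPart_add_negPart,
          Pi.posPart_apply, Pi.negPart_apply]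

theorem sum_abs_transitionOp_pow_le (hP : IsColumnStochasticOn S P) (n : ℕ) (μ : ι → ℝ) :
    ∑ s ∈ S, |(transitionOp S P ^ n) μ s| ≤ ∑ s ∈ S, |μ s| := by
  have h := sum_abs_apply_le_of_pos (fun _ => transitionOp_pow_nonneg hP.nonneg n)
    (fun μ => by rw [sum_transitionOp_pow hP.sum_eq_one, one_mul]) μ
  rwa [one_mul] at h

theorem pow_mul_sum_le_sum_transitionOp_pow (hP : ∀ s' ∈ S, ∀ s ∈ S, 0 ≤ P s' s)
    {A : ℕ → Finset ι} (hA : ∀ k, A k ⊆ S) {c : ℝ} (hc : 0 ≤ c)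
    (hreach : ∀ k, ∀ s ∈ A (k + 1), c ≤ ∑ s' ∈ A k, P s' s) (k : ℕ) {μ : ι → ℝ}
    (hμ : ∀ s ∈ S, 0 ≤ μ s) :
    c ^ k * ∑ s ∈ A k, μ s ≤ ∑ s ∈ A 0, (transitionOp S P ^ k) μ s := by
  induction k generalizing μ with
  | zero => simp
  | succ k ih =>
    have hstep : c * ∑ s ∈ A (k + 1), μ s ≤ ∑ s' ∈ A k, transitionOp S P μ s' :=
      calc c * ∑ s ∈ A (k + 1), μ s
          ≤ ∑ s ∈ A (k + 1), (∑ s' ∈ A k, P s' s) * μ s := by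
            rw [Finset.mul_sum]
            exact Finset.sum_le_sum fun s hs =>
              mul_le_mul_of_nonneg_right (hreach k s hs) (hμ s (hA _ hs))
        _ ≤ ∑ s ∈ S, (∑ s' ∈ A k, P s' s) * μ s :=
            Finset.sum_le_sum_of_subset_of_nonneg (hA _) fun s hs _ =>
              mul_nonneg (Finset.sum_nonneg fun s' hs' => hP s' (hA k hs') s hs) (hμ s hs)
        _ = ∑ s' ∈ A k, transitionOp S P μ s' := by
            simp only [transitionOp_apply, Finset.sum_mul]
            exact Finset.sum_comm
    calc c ^ (k + 1) * ∑ s ∈ A (k + 1), μ s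
        = c ^ k * (c * ∑ s ∈ A (k + 1), μ s) := by ring
      _ ≤ c ^ k * ∑ s' ∈ A k, transitionOp S P μ s' :=
          mul_le_mul_of_nonneg_left hstep (pow_nonneg hc k)
      _ ≤ ∑ s ∈ A 0, (transitionOp S P ^ (k + 1)) μ s := by
          rw [pow_succ, Module.End.mul_apply]
          exact ih (transitionOp_pow_nonneg hP 1 hμ)

end TransitionOp

section Doeblin

variable {ι : Type*} {S : Finset ι} {P : ι → ι → ℝ} {s₀ : ι} {N : ℕ} {δ : ℝ}

theorem sum_abs_apply_le_of_minorization {Q : Module.End ℝ (ι → ℝ)} (hs₀ : s₀ ∈ S)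
    (hpos : ∀ μ : ι → ℝ, (∀ s ∈ S, 0 ≤ μ s) → ∀ s ∈ S, 0 ≤ Q μ s)
    (hmass : ∀ μ : ι → ℝ, ∑ s ∈ S, Q μ s = ∑ s ∈ S, μ s)
    (hmin : ∀ μ : ι → ℝ, (∀ s ∈ S, 0 ≤ μ s) → δ * ∑ s ∈ S, μ s ≤ Q μ s₀)
    {d : ι → ℝ} (hd : ∑ s ∈ S, d s = 0) :
    ∑ s ∈ S, |Q d s| ≤ (1 - δ) * ∑ s ∈ S, |d s| := by
  classical
  -- Removing the mass `δ` that `Q` is guaranteed to put on `s₀` leaves a positive operator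
  -- of total mass `1 - δ`, and it agrees with `Q` on vectors of mass zero.
  let A : Module.End ℝ (ι → ℝ) :=
    Q - (∑ s ∈ S, LinearMap.proj s).smulRight (Pi.single s₀ δ : ι → ℝ)
  have hA : ∀ μ s, A μ s = Q μ s - (∑ u ∈ S, μ u) * (Pi.single s₀ δ : ι → ℝ) s := fun μ s => by
    simp [A, Finset.sum_apply]
  have hApos : ∀ μ : ι → ℝ, (∀ s ∈ S, 0 ≤ μ s) → ∀ s ∈ S, 0 ≤ A μ s := by
    intro μ hμ s hs
    rw [hA]
    by_cases h : s = s₀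
    · subst h; simpa [mul_comm] using hmin μ hμ
    · simpa [h] using hpos μ hμ s hs
  have hAmass : ∀ μ : ι → ℝ, ∑ s ∈ S, A μ s = (1 - δ) * ∑ s ∈ S, μ s := by
    intro μ
    simp only [hA, Finset.sum_sub_distrib, ← Finset.mul_sum, Finset.sum_pi_single', if_pos hs₀,
      hmass]
    ring
  have hAd : A d = Q d := by ext s; simp [hA, hd]
  simpa [hAd] using sum_abs_apply_le_of_pos hApos hAmass d

theorem DoeblinCondition.le_one (hP : IsColumnStochasticOn S P) (hs₀ : s₀ ∈ S)
    (hD : DoeblinCondition S P N s₀ δ) : δ ≤ 1 := by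
  classical
  have hμ : ∀ s ∈ S, 0 ≤ (Pi.single s₀ 1 : ι → ℝ) s := fun s _ => by
    by_cases h : s = s₀ <;> simp [h]
  have hmass : ∑ s ∈ S, (Pi.single s₀ 1 : ι → ℝ) s = 1 := by
    rw [Finset.sum_pi_single', if_pos hs₀]
  calc δ = δ * ∑ s ∈ S, (Pi.single s₀ 1 : ι → ℝ) s := by rw [hmass, mul_one]
    _ ≤ (transitionOp S P ^ N) (Pi.single s₀ 1) s₀ := hD _ hμ
    _ ≤ ∑ s ∈ S, (transitionOp S P ^ N) (Pi.single s₀ 1) s :=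
        Finset.single_le_sum (transitionOp_pow_nonneg hP.nonneg N hμ) hs₀
    _ = 1 := by rw [sum_transitionOp_pow hP.sum_eq_one, hmass]

theorem sum_abs_transitionOp_pow_le_of_sum_eq_zero (hP : IsColumnStochasticOn S P)
    (hs₀ : s₀ ∈ S) (hD : DoeblinCondition S P N s₀ δ) {d : ι → ℝ} (hd : ∑ s ∈ S, d s = 0)
    (t : ℕ) : ∑ s ∈ S, |(transitionOp S P ^ t) d s| ≤ (1 - δ) ^ (t / N) * ∑ s ∈ S, |d s| := by
  set T := transitionOp S P
  have hgeom : ∀ q : ℕ, ∑ s ∈ S, |((T ^ N) ^ q) d s| ≤ (1 - δ) ^ q * ∑ s ∈ S, |d s| := by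
    intro q
    induction q with
    | zero => simp
    | succ q ih =>
      have hq : ∑ s ∈ S, ((T ^ N) ^ q) d s = 0 := by
        rw [← pow_mul, sum_transitionOp_pow hP.sum_eq_one, hd]
      rw [pow_succ', Module.End.mul_apply, pow_succ, mul_comm _ (1 - δ), mul_assoc]
      exact (sum_abs_apply_le_of_minorization hs₀ (fun _ => transitionOp_pow_nonneg hP.nonneg N)
        (sum_transitionOp_pow hP.sum_eq_one N) hD hq).trans
        (mul_le_mul_of_nonneg_left ih (sub_nonneg.2 (hD.le_one hP hs₀)))
  calc ∑ s ∈ S, |(T ^ t) d s|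
      = ∑ s ∈ S, |(T ^ (t % N)) (((T ^ N) ^ (t / N)) d) s| := by
        rw [← Module.End.mul_apply, ← pow_mul, ← pow_add, Nat.mod_add_div]
    _ ≤ ∑ s ∈ S, |((T ^ N) ^ (t / N)) d s| := sum_abs_transitionOp_pow_le hP _ _
    _ ≤ (1 - δ) ^ (t / N) * ∑ s ∈ S, |d s| := hgeom _

theorem abs_transitionOp_pow_apply_sub_le (hP : IsColumnStochasticOn S P) (hs₀ : s₀ ∈ S)
    (hD : DoeblinCondition S P N s₀ δ) {μ ν : ι → ℝ}
    (hμν : ∑ s ∈ S, μ s = ∑ s ∈ S, ν s) (t : ℕ) {s : ι} (hs : s ∈ S) :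
    |(transitionOp S P ^ t) μ s - (transitionOp S P ^ t) ν s|
      ≤ (1 - δ) ^ (t / N) * ∑ u ∈ S, |μ u - ν u| := by
  have hd : ∑ u ∈ S, (μ - ν) u = 0 := by simp [Finset.sum_sub_distrib, hμν]
  calc |(transitionOp S P ^ t) μ s - (transitionOp S P ^ t) ν s|
      = |(transitionOp S P ^ t) (μ - ν) s| := by rw [map_sub, Pi.sub_apply]
    _ ≤ ∑ u ∈ S, |(transitionOp S P ^ t) (μ - ν) u| :=
        Finset.single_le_sum (f := fun u => |(transitionOp S P ^ t) (μ - ν) u|)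
          (fun _ _ => abs_nonneg _) hs
    _ ≤ (1 - δ) ^ (t / N) * ∑ u ∈ S, |μ u - ν u| :=
        sum_abs_transitionOp_pow_le_of_sum_eq_zero hP hs₀ hD hd t

theorem tendsto_one_sub_pow_div (hN : N ≠ 0) (hδ₀ : 0 < δ) (hδ₁ : δ ≤ 1) :
    Tendsto (fun t : ℕ => (1 - δ) ^ (t / N)) atTop (nhds 0) :=
  (tendsto_pow_atTop_nhds_zero_of_lt_one (by linarith) (by linarith)).comp
    (Nat.tendsto_div_const_atTop hN)

theorem tendsto_transitionOp_pow_apply_of_isStationaryOn (hP : IsColumnStochasticOn S P)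
    (hs₀ : s₀ ∈ S) (hN : N ≠ 0) (hδ : 0 < δ) (hD : DoeblinCondition S P N s₀ δ)
    {μ v : ι → ℝ} (hv : IsStationaryOn S P v) (hμv : ∑ s ∈ S, μ s = ∑ s ∈ S, v s) {s : ι}
    (hs : s ∈ S) : Tendsto (fun t => (transitionOp S P ^ t) μ s) atTop (nhds (v s)) := by
  have hbound := (tendsto_one_sub_pow_div hN hδ (hD.le_one hP hs₀)).mul_const
    (∑ u ∈ S, |μ u - v u|)
  rw [zero_mul] at hbound
  rw [tendsto_iff_norm_sub_tendsto_zero]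
  refine squeeze_zero (fun _ => norm_nonneg _) (fun t => ?_) hbound
  rw [Real.norm_eq_abs, ← hv.transitionOp_pow_apply t s hs]
  exact abs_transitionOp_pow_apply_sub_le hP hs₀ hD hμv t hs

theorem cauchySeq_transitionOp_pow_apply (hP : IsColumnStochasticOn S P) (hs₀ : s₀ ∈ S)
    (hN : N ≠ 0) (hδ : 0 < δ) (hD : DoeblinCondition S P N s₀ δ) (μ : ι → ℝ) {s : ι}
    (hs : s ∈ S) : CauchySeq (fun t => (transitionOp S P ^ t) μ s) := by
  set T := transitionOp S P
  have hbound := (tendsto_one_sub_pow_div hN hδ (hD.le_one hP hs₀)).mul_const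
    (2 * ∑ u ∈ S, |μ u|)
  rw [zero_mul] at hbound
  refine cauchySeq_of_le_tendsto_0 _ (fun n m k hn hm => ?_) hbound
  obtain ⟨a, rfl⟩ := Nat.exists_eq_add_of_le hn
  obtain ⟨b, rfl⟩ := Nat.exists_eq_add_of_le hm
  have hmass : ∑ u ∈ S, (T ^ a) μ u = ∑ u ∈ S, (T ^ b) μ u := by
    rw [sum_transitionOp_pow hP.sum_eq_one, sum_transitionOp_pow hP.sum_eq_one]
  have hspread : ∑ u ∈ S, |(T ^ a) μ u - (T ^ b) μ u| ≤ 2 * ∑ u ∈ S, |μ u| :=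
    calc ∑ u ∈ S, |(T ^ a) μ u - (T ^ b) μ u|
        ≤ ∑ u ∈ S, |(T ^ a) μ u| + ∑ u ∈ S, |(T ^ b) μ u| := by
          rw [← Finset.sum_add_distrib]; exact Finset.sum_le_sum fun _ _ => abs_sub _ _
      _ ≤ 2 * ∑ u ∈ S, |μ u| := by
          linarith [sum_abs_transitionOp_pow_le hP a μ, sum_abs_transitionOp_pow_le hP b μ]
  rw [Real.dist_eq, pow_add, pow_add, Module.End.mul_apply, Module.End.mul_apply]
  exact (abs_transitionOp_pow_apply_sub_le hP hs₀ hD hmass k hs).trans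
    (mul_le_mul_of_nonneg_left hspread (pow_nonneg (sub_nonneg.2 (hD.le_one hP hs₀)) _))

theorem isStationaryOn_of_tendsto {μ v : ι → ℝ}
    (hv : ∀ s ∈ S, Tendsto (fun t => (transitionOp S P ^ t) μ s) atTop (nhds (v s))) :
    IsStationaryOn S P v := by
  intro s hs
  refine tendsto_nhds_unique ?_ ((hv s hs).comp (tendsto_add_atTop_nat 1))
  simp only [Function.comp_def, transitionOp_pow_succ_apply]
  exact tendsto_finsetSum _ fun u hu => (hv u hu).const_mul _

end Doeblin

section ElementaryLink

variable {mstar : ℕ} {p : ℝ} {α : ℤ → ℝ}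

theorem chainDist_eq_transitionOp_pow (μ0 : ℤ → ℝ) (t : ℕ) :
    chainDist mstar p α μ0 t
      = (transitionOp (Finset.Icc (-1 : ℤ) mstar) (Pd mstar p α) ^ t) μ0 := by
  induction t with
  | zero => rfl
  | succ t ih => funext s'; rw [transitionOp_pow_succ_apply, ← ih]; rfl

theorem neg_one_mem_Icc : (-1 : ℤ) ∈ Finset.Icc (-1 : ℤ) mstar :=
  Finset.mem_Icc.2 ⟨le_rfl, by omega⟩

theorem sum_T0 {s : ℤ} (hs : s ∈ Finset.Icc (-1 : ℤ) mstar) :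
    ∑ s' ∈ Finset.Icc (-1 : ℤ) mstar, T0 mstar s' s = 1 := by
  obtain ⟨u, hu, hT⟩ : ∃ u ∈ Finset.Icc (-1 : ℤ) mstar,
      ∀ s', T0 mstar s' s = if s' = u then 1 else 0 := by
    rw [Finset.mem_Icc] at hs
    by_cases h : s = -1 ∨ s = mstar
    · exact ⟨-1, neg_one_mem_Icc, fun s' => by unfold T0; split_ifs <;> first | rfl | omega⟩
    · exact ⟨s + 1, Finset.mem_Icc.2 (by omega),
        fun s' => by unfold T0; split_ifs <;> first | rfl | omega⟩
  simp [hT, hu]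

theorem sum_T1 (s : ℤ) : ∑ s' ∈ Finset.Icc (-1 : ℤ) mstar, T1 p s' s = 1 := by
  have hT : ∀ s', T1 p s' s = (if s' = -1 then 1 - p else 0) + if s' = 0 then p else 0 := by
    intro s'; unfold T1; split_ifs <;> first | omega | ring
  simp [hT, Finset.sum_add_distrib]

theorem sum_Pd : ∀ s ∈ Finset.Icc (-1 : ℤ) mstar,
    ∑ s' ∈ Finset.Icc (-1 : ℤ) mstar, Pd mstar p α s' s = 1 := by
  intro s hs
  simp only [Pd, Finset.sum_add_distrib, ← Finset.sum_mul, sum_T0 hs, sum_T1]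
  ring

theorem Pd_nonneg (hp0 : 0 ≤ p) (hp1 : p ≤ 1) (hα : ValidDecision mstar α) :
    ∀ s' ∈ Finset.Icc (-1 : ℤ) mstar, ∀ s ∈ Finset.Icc (-1 : ℤ) mstar, 0 ≤ Pd mstar p α s' s := by
  intro s' _ s hs
  obtain ⟨hα0, hα1⟩ := hα s hs
  have hT0 : 0 ≤ T0 mstar s' s := by unfold T0; split_ifs <;> norm_num
  have hT1 : 0 ≤ T1 p s' s := by unfold T1; split_ifs <;> linarith
  exact add_nonneg (mul_nonneg hT0 hα0) (mul_nonneg hT1 (by linarith))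

/-- `-1` and the states `m ≥ m* + 1 - k`: from these the chain is at `-1` after `k` steps with
probability at least `(1 - p)^k`, whatever the decision. -/
def hitLayer (mstar k : ℕ) : Finset ℤ :=
  (Finset.Icc (-1 : ℤ) mstar).filter fun s => s = -1 ∨ (mstar : ℤ) + 1 ≤ k + s

theorem hitLayer_zero : hitLayer mstar 0 = {-1} := by
  ext s; simp only [hitLayer, Finset.mem_filter, Finset.mem_Icc, Finset.mem_singleton]; omega

theorem hitLayer_succ_mstar : hitLayer mstar (mstar + 1) = Finset.Icc (-1 : ℤ) mstar := by
  ext s; simp only [hitLayer, Finset.mem_filter, Finset.mem_Icc]; omega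

theorem one_sub_le_sum_Pd_hitLayer (hp0 : 0 ≤ p) (hp1 : p ≤ 1) (hα : ValidDecision mstar α)
    (k : ℕ) : ∀ s ∈ hitLayer mstar (k + 1), 1 - p ≤ ∑ s' ∈ hitLayer mstar k, Pd mstar p α s' s := by
  intro s hs
  have hsS := (Finset.mem_filter.1 hs).1
  have hα0 := (hα s hsS).1
  have hPd := Pd_nonneg hp0 hp1 hα
  have hlayer : hitLayer mstar k ⊆ Finset.Icc (-1 : ℤ) mstar := Finset.filter_subset _ _
  have hneg : (-1 : ℤ) ∈ hitLayer mstar k := Finset.mem_filter.2 ⟨neg_one_mem_Icc, Or.inl rfl⟩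
  simp only [hitLayer, Finset.mem_filter, Finset.mem_Icc, Nat.cast_add, Nat.cast_one] at hs
  by_cases hend : s = -1 ∨ s = mstar
  · have hentry : Pd mstar p α (-1) s = α s + (1 - p) * (1 - α s) := by
      rcases hend with rfl | rfl <;> simp [Pd, T0, T1]
    calc 1 - p ≤ Pd mstar p α (-1) s := by rw [hentry]; nlinarith
      _ ≤ _ := Finset.single_le_sum (fun s' hs' => hPd s' (hlayer hs') s hsS) hneg
  · have hsucc : s + 1 ∈ hitLayer mstar k := by
      simp only [hitLayer, Finset.mem_filter, Finset.mem_Icc]; omega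
    have hentries : Pd mstar p α (-1) s + Pd mstar p α (s + 1) s = (1 - p) * (1 - α s) + α s := by
      have h1 : s ≠ -1 := by omega
      have h2 : s ≠ mstar := by omega
      have h3 : s + 1 ≠ -1 := by omega
      have h4 : s + 1 ≠ 0 := by omega
      simp [Pd, T0, T1, h1, h2, h3, h4, eq_comm (a := (-1 : ℤ))]
    calc 1 - p ≤ Pd mstar p α (-1) s + Pd mstar p α (s + 1) s := by rw [hentries]; nlinarith
      _ = ∑ s' ∈ {-1, s + 1}, Pd mstar p α s' s := by
          rw [Finset.sum_pair (show (-1 : ℤ) ≠ s + 1 by omega)]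
      _ ≤ _ := Finset.sum_le_sum_of_subset_of_nonneg (Finset.insert_subset hneg
          (Finset.singleton_subset_iff.2 hsucc)) fun s' hs' _ => hPd s' (hlayer hs') s hsS

theorem Pd_isColumnStochasticOn (hp0 : 0 ≤ p) (hp1 : p ≤ 1) (hα : ValidDecision mstar α) :
    IsColumnStochasticOn (Finset.Icc (-1 : ℤ) mstar) (Pd mstar p α) :=
  ⟨Pd_nonneg hp0 hp1 hα, sum_Pd⟩

theorem Pd_doeblinCondition (hp0 : 0 ≤ p) (hp1 : p ≤ 1) (hα : ValidDecision mstar α) :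
    DoeblinCondition (Finset.Icc (-1 : ℤ) mstar) (Pd mstar p α) (mstar + 1) (-1)
      ((1 - p) ^ (mstar + 1)) := fun μ hμ => by
  simpa [hitLayer_zero, hitLayer_succ_mstar] using
    pow_mul_sum_le_sum_transitionOp_pow (A := hitLayer mstar) (Pd_nonneg hp0 hp1 hα)
      (fun _ => Finset.filter_subset _ _)
      (sub_nonneg.2 hp1) (one_sub_le_sum_Pd_hitLayer hp0 hp1 hα) (mstar + 1) hμ

theorem tendsto_chainDist_of_isStationaryOn (hp0 : 0 ≤ p) (hp1 : p < 1)
    (hα : ValidDecision mstar α) {μ0 : ℤ → ℝ} (hμ0 : ValidInit mstar μ0) {v : ℤ → ℝ}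
    (hv : IsStationaryOn (Finset.Icc (-1 : ℤ) mstar) (Pd mstar p α) v)
    (hv1 : ∑ s ∈ Finset.Icc (-1 : ℤ) mstar, v s = 1) :
    ∀ s ∈ Finset.Icc (-1 : ℤ) mstar,
      Tendsto (fun t => chainDist mstar p α μ0 t s) atTop (nhds (v s)) := by
  intro s hs
  simp only [chainDist_eq_transitionOp_pow]
  exact tendsto_transitionOp_pow_apply_of_isStationaryOn
    (Pd_isColumnStochasticOn hp0 hp1.le hα) neg_one_mem_Icc (Nat.succ_ne_zero mstar)
    (pow_pos (sub_pos.2 hp1) _) (Pd_doeblinCondition hp0 hp1.le hα) hv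
    (hμ0.2.trans hv1.symm) hs

theorem exists_tendsto_chainDist (hp0 : 0 ≤ p) (hp1 : p < 1) (hα : ValidDecision mstar α)
    (μ0 : ℤ → ℝ) : ∃ v : ℤ → ℝ, ∀ s ∈ Finset.Icc (-1 : ℤ) mstar,
      Tendsto (fun t => chainDist mstar p α μ0 t s) atTop (nhds (v s)) := by
  refine ⟨fun s => limUnder atTop fun t => chainDist mstar p α μ0 t s, fun s hs => ?_⟩
  simp only [chainDist_eq_transitionOp_pow]
  exact (cauchySeq_transitionOp_pow_apply (Pd_isColumnStochasticOn hp0 hp1.le hα)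
    neg_one_mem_Icc (Nat.succ_ne_zero mstar) (pow_pos (sub_pos.2 hp1) _)
    (Pd_doeblinCondition hp0 hp1.le hα) μ0 hs).tendsto_limUnder

theorem tendsto_Ftil {μ0 f v : ℤ → ℝ} (hf0 : f (-1) = 0)
    (hv : ∀ s ∈ Finset.Icc (-1 : ℤ) mstar,
      Tendsto (fun t => chainDist mstar p α μ0 t s) atTop (nhds (v s))) :
    Tendsto (Ftil mstar p α μ0 f) atTop
      (nhds (∑ m ∈ Finset.Icc (-1 : ℤ) mstar, f m * v m)) := by
  have hIcc : Finset.Icc (-1 : ℤ) mstar = insert (-1) (Finset.Icc (0 : ℤ) mstar) := by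
    ext s; simp only [Finset.mem_Icc, Finset.mem_insert]; omega
  rw [hIcc, Finset.sum_insert (by simp), hf0, zero_mul, zero_add]
  exact tendsto_finsetSum _ fun m hm =>
    (hv m (hIcc ▸ Finset.mem_insert_of_mem hm)).const_mul _

theorem lpFeasible_of_isStationaryOn (hα : ValidDecision mstar α) {v : ℤ → ℝ}
    (hv0 : ∀ s ∈ Finset.Icc (-1 : ℤ) mstar, 0 ≤ v s)
    (hv1 : ∑ s ∈ Finset.Icc (-1 : ℤ) mstar, v s = 1)
    (hv : IsStationaryOn (Finset.Icc (-1 : ℤ) mstar) (Pd mstar p α) v) :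
    LPFeasible mstar p v (fun s => α s * v s) (fun s => (1 - α s) * v s) := by
  refine ⟨fun s hs => ?_, hv1, fun s _ => by ring, fun s' hs' => ?_⟩
  · obtain ⟨hα0, hα1⟩ := hα s hs
    have hvs := hv0 s hs
    have hv1s : v s ≤ 1 := hv1 ▸ Finset.single_le_sum hv0 hs
    exact ⟨by positivity, by nlinarith, by nlinarith, by nlinarith, hv1s⟩
  · rw [← hv s' hs', transitionOp_apply]
    exact Finset.sum_congr rfl fun s _ => by unfold Pd; ring

theorem exists_lpFeasible_of_tendsto_Ftil (hp0 : 0 ≤ p) (hp1 : p < 1)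
    (hα : ValidDecision mstar α) {μ0 f : ℤ → ℝ} (hμ0 : ValidInit mstar μ0) (hf0 : f (-1) = 0)
    {L : ℝ} (hL : Tendsto (Ftil mstar p α μ0 f) atTop (nhds L)) :
    ∃ v w0 w1 : ℤ → ℝ, LPFeasible mstar p v w0 w1 ∧
      L = ∑ m ∈ Finset.Icc (-1 : ℤ) mstar, f m * v m := by
  obtain ⟨v, hv⟩ := exists_tendsto_chainDist hp0 hp1 hα μ0
  have hv0 : ∀ s ∈ Finset.Icc (-1 : ℤ) mstar, 0 ≤ v s := fun s hs =>
    ge_of_tendsto' (hv s hs) fun t => by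
      rw [chainDist_eq_transitionOp_pow]
      exact transitionOp_pow_nonneg (Pd_nonneg hp0 hp1.le hα) t hμ0.1 s hs
  have hv1 : ∑ s ∈ Finset.Icc (-1 : ℤ) mstar, v s = 1 := by
    refine tendsto_nhds_unique (tendsto_finsetSum _ hv) ?_
    simp only [chainDist_eq_transitionOp_pow, sum_transitionOp_pow sum_Pd, hμ0.2]
    exact tendsto_const_nhds
  have hstat : IsStationaryOn (Finset.Icc (-1 : ℤ) mstar) (Pd mstar p α) v :=
    isStationaryOn_of_tendsto (by simpa only [chainDist_eq_transitionOp_pow] using hv)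
  exact ⟨_, _, _, lpFeasible_of_isStationaryOn hα hv0 hv1 hstat,
    tendsto_nhds_unique hL (tendsto_Ftil hf0 hv)⟩

theorem LPFeasible.validDecision_div {v w0 w1 : ℤ → ℝ} (hfeas : LPFeasible mstar p v w0 w1) :
    ValidDecision mstar fun s => w0 s / v s := fun s hs => by
  obtain ⟨h0, h1, -, -, -⟩ := hfeas.1 s hs
  exact ⟨div_nonneg h0 (h0.trans h1), div_le_one_of_le₀ h1 (h0.trans h1)⟩

/-- Where `v s = 0`, the decision `w0 s / v s = 0` is junk, but then also `w0 s = w1 s = 0`. -/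
theorem LPFeasible.isStationaryOn_div {v w0 w1 : ℤ → ℝ} (hfeas : LPFeasible mstar p v w0 w1) :
    IsStationaryOn (Finset.Icc (-1 : ℤ) mstar) (Pd mstar p fun s => w0 s / v s) v := by
  obtain ⟨hbox, -, hadd, hfix⟩ := hfeas
  intro s' hs'
  rw [hfix s' hs', transitionOp_apply]
  refine Finset.sum_congr rfl fun s hs => ?_
  obtain ⟨h0, h1, h2, h3, -⟩ := hbox s hs
  rcases (h0.trans h1).eq_or_lt with hv | hv
  · rw [← hv, le_antisymm (hv ▸ h1) h0, le_antisymm (hv ▸ h3) h2]; simp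
  · have hw1 : w1 s = v s - w0 s := by linarith [hadd s hs]
    unfold Pd
    field_simp
    rw [hw1]

end ElementaryLink

theorem lp_optimal_steady_state_general (mstar : ℕ) (p : ℝ) (hp0 : 0 < p) (hp1 : p < 1)
    (f : ℤ → ℝ) (hf0 : f (-1) = 0)
    (μ0 : ℤ → ℝ) (hμ0 : ValidInit mstar μ0) :
    (sSup {L : ℝ | ∃ α : ℤ → ℝ, ValidDecision mstar α ∧
        Tendsto (Ftil mstar p α μ0 f) atTop (nhds L)}
      = sSup {c : ℝ | ∃ v w0 w1 : ℤ → ℝ, LPFeasible mstar p v w0 w1 ∧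
          c = ∑ m ∈ Finset.Icc (-1 : ℤ) (mstar : ℤ), f m * v m}) ∧
    (∀ v w0 w1 : ℤ → ℝ, LPFeasible mstar p v w0 w1 →
      ∀ m ∈ Finset.Icc (-1 : ℤ) (mstar : ℤ), 0 < v m →
        0 ≤ w0 m / v m ∧ 0 ≤ w1 m / v m ∧ w0 m / v m + w1 m / v m = 1) := by
  refine ⟨congrArg sSup (Set.ext fun L => ⟨?_, ?_⟩), ?_⟩
  · rintro ⟨α, hα, hL⟩
    exact exists_lpFeasible_of_tendsto_Ftil hp0.le hp1 hα hμ0 hf0 hL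
  · rintro ⟨v, w0, w1, hfeas, rfl⟩
    exact ⟨_, hfeas.validDecision_div, tendsto_Ftil hf0 (tendsto_chainDist_of_isStationaryOn
      hp0.le hp1 hfeas.validDecision_div hμ0 hfeas.isStationaryOn_div hfeas.2.1)⟩
  · intro v w0 w1 hfeas m hm hvm
    obtain ⟨h0, -, h2, -, -⟩ := hfeas.1 m hm
    refine ⟨div_nonneg h0 hvm.le, div_nonneg h2 hvm.le, ?_⟩
    rw [← add_div, hfeas.2.2.1 m hm, div_self hvm.ne']

/-- **Linear program for the optimal steady-state value of an elementary link**: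
the supremum over decision functions of the steady-state value equals the optimal value
of the linear program, and every feasible point yields a decision function via
`d(m)(a) = ⟨m|w_a⟩/⟨m|v⟩` whenever `⟨m|v⟩ > 0`. -/
theorem lp_optimal_steady_state (mstar : ℕ) (p : ℝ) (hp0 : 0 < p) (hp1 : p < 1)
    (f : ℤ → ℝ) (hf0 : f (-1) = 0)
    (hf : ∀ m ∈ Finset.Icc (-1 : ℤ) (mstar : ℤ), 0 ≤ f m ∧ f m ≤ 1)
    (μ0 : ℤ → ℝ) (hμ0 : ValidInit mstar μ0) :
    (sSup {L : ℝ | ∃ α : ℤ → ℝ, ValidDecision mstar α ∧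
        Tendsto (Ftil mstar p α μ0 f) atTop (nhds L)}
      = sSup {c : ℝ | ∃ v w0 w1 : ℤ → ℝ, LPFeasible mstar p v w0 w1 ∧
          c = ∑ m ∈ Finset.Icc (-1 : ℤ) (mstar : ℤ), f m * v m}) ∧
    (∀ v w0 w1 : ℤ → ℝ, LPFeasible mstar p v w0 w1 →
      ∀ m ∈ Finset.Icc (-1 : ℤ) (mstar : ℤ), 0 < v m →
        0 ≤ w0 m / v m ∧ 0 ≤ w1 m / v m ∧ w0 m / v m + w1 m / v m = 1) :=
  lp_optimal_steady_state_general mstar p hp0 hp1 f hf0 μ0 hμ0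
end
end
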